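/- arXiv:2405.00619 — 4 statements merged into one kernel-verified Lean document; each statement's English description precedes it below -/
import Mathlib

section
/- Let D be the incidence matrix of a connected undirected graph G on n vertices with maximal degree d_max, and let T ⊆ E be a nonempty set of edges. Then the compatibility factor satisfies κ_T ≥ 1/(2 min{√d_max, √|T|}). -/
open MeasureTheory ProbabilityTheory Finset Matrix

noncomputable section
namespace OneBit

/-- `D` is the edge–vertex incidence matrix of the undirected graph `G`:
rows indexed by edges `e = (i,j)` with `i < j`, carrying `1` at `min(i,j)` and `-1` at `max(i,j)`. -/
def IsIncidenceMatrix {n m : ℕ} (G : SimpleGraph (Fin n)) (D : Matrix (Fin m) (Fin n) ℝ) : Prop :=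
  ∃ ends : Fin m → Fin n × Fin n,
    Function.Injective ends ∧
    (∀ e, (ends e).1 < (ends e).2 ∧ G.Adj (ends e).1 (ends e).2) ∧
    (∀ i j : Fin n, i < j → G.Adj i j → ∃ e, ends e = (i, j)) ∧
    (∀ e k, D e k = if k = (ends e).1 then 1 else if k = (ends e).2 then -1 else 0)

/-- `Dd` is the Moore–Penrose pseudoinverse of `D`. -/
def IsMoorePenrose {n m : ℕ} (D : Matrix (Fin m) (Fin n) ℝ) (Dd : Matrix (Fin n) (Fin m) ℝ) : Prop :=
  D * Dd * D = D ∧ Dd * D * Dd = Dd ∧ (D * Dd)ᵀ = D * Dd ∧ (Dd * D)ᵀ = Dd * D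

/-- Inverse scaling factor `ρ = max_j ‖s_j‖₂`, the columns `s_j` of `D†`. -/
def rho {n m : ℕ} (Dd : Matrix (Fin n) (Fin m) ℝ) : ℝ :=
  ⨆ j : Fin m, Real.sqrt (∑ i, (Dd i j) ^ 2)

/-- Euclidean norm on `ℝⁿ`. -/
def l2 {n : ℕ} (p : Fin n → ℝ) : ℝ := Real.sqrt (∑ i, (p i) ^ 2)

/-- `‖(Dp)_T‖₁`, the ℓ₁ norm of `Dp` restricted to the coordinates in `T`. -/
def tvOn {n m : ℕ} (D : Matrix (Fin m) (Fin n) ℝ) (T : Finset (Fin m)) (p : Fin n → ℝ) : ℝ :=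
  ∑ e ∈ T, |D.mulVec p e|

/-- Compatibility factor `κ_T = inf_{p ∈ [0,1]^n, (Dp)_T ≠ 0} √|T| ‖p‖₂ / ‖(Dp)_T‖₁`. -/
def compat {n m : ℕ} (D : Matrix (Fin m) (Fin n) ℝ) (T : Finset (Fin m)) : ℝ :=
  sInf {x : ℝ | ∃ p : Fin n → ℝ, (∀ i, p i ∈ Set.Icc (0:ℝ) 1) ∧ tvOn D T p ≠ 0 ∧
    x = Real.sqrt T.card * l2 p / tvOn D T p}

/-- `‖p‖₀`, the number of nonzero coordinates. -/
def supp0 {n : ℕ} (p : Fin n → ℝ) : ℕ := Nat.card {i // p i ≠ 0}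

/-- Proposition 1 (first part): for the incidence matrix of a connected graph `G` with
maximal degree `d_max` and a nonempty edge set `T`,
`κ_T ≥ 1 / (2 min(√d_max, √|T|))`. -/
theorem compatibility_factor_lower_bound
    {n m : ℕ} (G : SimpleGraph (Fin n)) [DecidableRel G.Adj]
    (D : Matrix (Fin m) (Fin n) ℝ)
    (hD : IsIncidenceMatrix G D) (hG : G.Connected)
    (T : Finset (Fin m)) (hT : T.Nonempty) :
    1 / (2 * min (Real.sqrt G.maxDegree) (Real.sqrt T.card)) ≤ compat D T := by
  classical
  obtain ⟨ends, hinj, hadj, hsurj, hval⟩ := hD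
  have hne : ∀ e, (ends e).1 ≠ (ends e).2 := fun e => ne_of_lt (hadj e).1
  -- mulVec formula
  have hmul : ∀ (p : Fin n → ℝ) (e : Fin m),
      D.mulVec p e = p (ends e).1 - p (ends e).2 := by
    intro p e
    have h : ∀ k, D e k * p k =
        (if k = (ends e).1 then p k else 0) + (if k = (ends e).2 then -p k else 0) := by
      intro k
      rw [hval e k]
      by_cases h1 : k = (ends e).1 <;> by_cases h2 : k = (ends e).2 <;>
        simp [h1, h2, hne e, (hne e).symm]
    simp only [Matrix.mulVec, dotProduct]
    rw [Finset.sum_congr rfl (fun k _ => h k), Finset.sum_add_distrib,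
      Finset.sum_ite_eq', Finset.sum_ite_eq']
    simp [sub_eq_add_neg]
  obtain ⟨e₀, he₀⟩ := hT
  -- max degree is positive
  have hdpos : 0 < G.maxDegree := by
    have h1 : 0 < G.degree (ends e₀).1 := by
      rw [G.degree_pos_iff_exists_adj]
      exact ⟨(ends e₀).2, (hadj e₀).2⟩
    exact lt_of_lt_of_le h1 (G.degree_le_maxDegree _)
  have hTpos : (0:ℝ) < (T.card : ℝ) := by
    exact_mod_cast Finset.card_pos.mpr ⟨e₀, he₀⟩
  -- counting lemma
  have hcount : ∀ v : Fin n,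
      (T.filter (fun e => (ends e).1 = v ∨ (ends e).2 = v)).card ≤ G.maxDegree := by
    intro v
    have hmaps : ∀ e ∈ T.filter (fun e => (ends e).1 = v ∨ (ends e).2 = v),
        (if (ends e).1 = v then (ends e).2 else (ends e).1) ∈ G.neighborFinset v := by
      intro e he
      rw [Finset.mem_filter] at he
      rw [SimpleGraph.mem_neighborFinset]
      by_cases h1 : (ends e).1 = v
      · simp only [h1, if_true]
        exact h1 ▸ (hadj e).2
      · have h2 : (ends e).2 = v := he.2.resolve_left h1
        simp only [h1, if_false]
        exact (h2 ▸ (hadj e).2).symm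
    have hinjOn : Set.InjOn (fun e => if (ends e).1 = v then (ends e).2 else (ends e).1)
        (T.filter (fun e => (ends e).1 = v ∨ (ends e).2 = v)) := by
      intro e he e' he' hf
      simp only [Finset.coe_filter, Set.mem_setOf_eq] at he he'
      simp only at hf
      apply hinj
      by_cases h1 : (ends e).1 = v <;> by_cases h1' : (ends e').1 = v
      · simp only [h1, h1', if_true] at hf
        exact Prod.ext (h1.trans h1'.symm) hf
      · have h2' : (ends e').2 = v := he'.2.resolve_left h1'
        simp only [h1, h1', if_true, if_false] at hf
        exfalso
        have hc : (ends e).1 < (ends e).1 :=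
          calc (ends e).1 < (ends e).2 := (hadj e).1
            _ = (ends e').1 := hf
            _ < (ends e').2 := (hadj e').1
            _ = v := h2'
            _ = (ends e).1 := h1.symm
        exact lt_irrefl _ hc
      · have h2 : (ends e).2 = v := he.2.resolve_left h1
        simp only [h1, h1', if_true, if_false] at hf
        exfalso
        have hc : (ends e').1 < (ends e').1 :=
          calc (ends e').1 < (ends e').2 := (hadj e').1
            _ = (ends e).1 := hf.symm
            _ < (ends e).2 := (hadj e).1
            _ = v := h2
            _ = (ends e').1 := h1'.symm
        exact lt_irrefl _ hc
      · have h2 : (ends e).2 = v := he.2.resolve_left h1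
        have h2' : (ends e').2 = v := he'.2.resolve_left h1'
        simp only [h1, h1', if_false] at hf
        exact Prod.ext hf (h2.trans h2'.symm)
    calc (T.filter (fun e => (ends e).1 = v ∨ (ends e).2 = v)).card
        ≤ (G.neighborFinset v).card := Finset.card_le_card_of_injOn _ hmaps hinjOn
      _ = G.degree v := (G.card_neighborFinset_eq_degree v)
      _ ≤ G.maxDegree := G.degree_le_maxDegree v
  -- now the sInf bound
  apply le_csInf
  · -- nonempty: indicator of one endpoint
    refine ⟨_, fun k => if k = (ends e₀).1 then 1 else 0, fun i => ?_, ?_, rfl⟩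
    · by_cases h : i = (ends e₀).1 <;> simp [h]
    · have h1 : D.mulVec (fun k => if k = (ends e₀).1 then (1:ℝ) else 0) e₀ = 1 := by
        rw [hmul]
        simp [hne e₀, (hne e₀).symm]
      have : (1:ℝ) ≤ tvOn D T (fun k => if k = (ends e₀).1 then 1 else 0) := by
        unfold tvOn
        calc (1:ℝ) = |D.mulVec (fun k => if k = (ends e₀).1 then (1:ℝ) else 0) e₀| := by
              rw [h1]; norm_num
          _ ≤ _ := Finset.single_le_sum
              (f := fun e => |D.mulVec (fun k => if k = (ends e₀).1 then (1:ℝ) else 0) e|)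
              (fun e _ => abs_nonneg _) he₀
      linarith
  · rintro x ⟨p, hp, htv0, rfl⟩
    have hpnn : ∀ i, 0 ≤ p i := fun i => (hp i).1
    have htvnn : 0 ≤ tvOn D T p := Finset.sum_nonneg fun e _ => abs_nonneg _
    have htvpos : 0 < tvOn D T p := lt_of_le_of_ne htvnn (Ne.symm htv0)
    have hl2nn : 0 ≤ l2 p := Real.sqrt_nonneg _
    have hple : ∀ i, p i ≤ l2 p := by
      intro i
      have : p i = Real.sqrt (p i ^ 2) := (Real.sqrt_sq (hpnn i)).symm
      rw [this]
      exact Real.sqrt_le_sqrt (Finset.single_le_sum (fun j _ => sq_nonneg (p j))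
        (Finset.mem_univ i))
    -- bound A : tv ≤ |T| * l2 p
    have boundA : tvOn D T p ≤ (T.card : ℝ) * l2 p := by
      unfold tvOn
      calc ∑ e ∈ T, |D.mulVec p e| ≤ ∑ _e ∈ T, l2 p := by
            apply Finset.sum_le_sum
            intro e _
            rw [hmul, abs_sub_le_iff]
            constructor
            · linarith [hpnn (ends e).2, hple (ends e).1]
            · linarith [hpnn (ends e).1, hple (ends e).2]
        _ = (T.card : ℝ) * l2 p := by rw [Finset.sum_const, nsmul_eq_mul]
    -- bound B : tv ≤ sqrt(dmax) * sqrt(|T|) * l2 p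
    have boundB : tvOn D T p ≤
        Real.sqrt G.maxDegree * Real.sqrt T.card * l2 p := by
      have cauchy : (tvOn D T p) ^ 2 ≤ (T.card : ℝ) * ∑ e ∈ T, (D.mulVec p e) ^ 2 := by
        have h := Finset.sum_mul_sq_le_sq_mul_sq T (fun _ => (1:ℝ)) (fun e => |D.mulVec p e|)
        simp only [one_mul, one_pow, Finset.sum_const, nsmul_eq_mul, mul_one, sq_abs] at h
        unfold tvOn
        calc (∑ e ∈ T, |D.mulVec p e|) ^ 2 ≤ (T.card : ℝ) * ∑ e ∈ T, |D.mulVec p e| ^ 2 := by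
              simpa using h
          _ = (T.card : ℝ) * ∑ e ∈ T, (D.mulVec p e) ^ 2 := by
              congr 1; exact Finset.sum_congr rfl fun e _ => sq_abs _
      have sq_bound : ∑ e ∈ T, (D.mulVec p e) ^ 2
          ≤ ∑ e ∈ T, (p (ends e).1 ^ 2 + p (ends e).2 ^ 2) := by
        apply Finset.sum_le_sum
        intro e _
        rw [hmul]
        nlinarith [mul_nonneg (hpnn (ends e).1) (hpnn (ends e).2)]
      have deg_bound : ∑ e ∈ T, (p (ends e).1 ^ 2 + p (ends e).2 ^ 2)
          ≤ (G.maxDegree : ℝ) * ∑ i, p i ^ 2 := by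
        have step : ∑ e ∈ T, (p (ends e).1 ^ 2 + p (ends e).2 ^ 2)
            = ∑ v, ((T.filter (fun e => (ends e).1 = v ∨ (ends e).2 = v)).card : ℝ)
              * p v ^ 2 := by
          have hterm : ∀ e ∈ T, p (ends e).1 ^ 2 + p (ends e).2 ^ 2
              = ∑ v, ((if (ends e).1 = v then p v ^ 2 else 0)
                + (if (ends e).2 = v then p v ^ 2 else 0)) := by
            intro e _
            rw [Finset.sum_add_distrib, Finset.sum_ite_eq, Finset.sum_ite_eq]
            simp
          rw [Finset.sum_congr rfl hterm, Finset.sum_comm]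
          refine Finset.sum_congr rfl fun v _ => ?_
          have hdisj : Disjoint (T.filter (fun e => (ends e).1 = v))
              (T.filter (fun e => (ends e).2 = v)) := by
            rw [Finset.disjoint_filter]
            intro e _ h1 h2
            exact hne e (h1.trans h2.symm)
          have hun : T.filter (fun e => (ends e).1 = v ∨ (ends e).2 = v)
              = T.filter (fun e => (ends e).1 = v) ∪ T.filter (fun e => (ends e).2 = v) :=
            Finset.filter_or _ _ _
          rw [Finset.sum_add_distrib, ← Finset.sum_filter, ← Finset.sum_filter,
            Finset.sum_const, Finset.sum_const, hun,
            Finset.card_union_of_disjoint hdisj]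
          push_cast
          ring
        rw [step]
        calc ∑ v, ((T.filter (fun e => (ends e).1 = v ∨ (ends e).2 = v)).card : ℝ) * p v ^ 2
            ≤ ∑ v, (G.maxDegree : ℝ) * p v ^ 2 := by
              apply Finset.sum_le_sum
              intro v _
              apply mul_le_mul_of_nonneg_right _ (sq_nonneg _)
              exact_mod_cast hcount v
          _ = (G.maxDegree : ℝ) * ∑ i, p i ^ 2 := by rw [← Finset.mul_sum]
      have key : (tvOn D T p) ^ 2
          ≤ (Real.sqrt G.maxDegree * Real.sqrt T.card * l2 p) ^ 2 := by
        have h1 : Real.sqrt (G.maxDegree : ℝ) ^ 2 = (G.maxDegree : ℝ) :=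
          Real.sq_sqrt (by positivity)
        have h2 : Real.sqrt (T.card : ℝ) ^ 2 = (T.card : ℝ) :=
          Real.sq_sqrt (by positivity)
        have h3 : l2 p ^ 2 = ∑ i, p i ^ 2 := Real.sq_sqrt (by positivity)
        calc (tvOn D T p) ^ 2 ≤ (T.card : ℝ) * ∑ e ∈ T, (D.mulVec p e) ^ 2 := cauchy
          _ ≤ (T.card : ℝ) * ((G.maxDegree : ℝ) * ∑ i, p i ^ 2) :=
              mul_le_mul_of_nonneg_left (le_trans sq_bound deg_bound) (le_of_lt hTpos)
          _ = (Real.sqrt G.maxDegree * Real.sqrt T.card * l2 p) ^ 2 := by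
              rw [mul_pow, mul_pow, h1, h2, h3]; ring
      have hrnn : 0 ≤ Real.sqrt G.maxDegree * Real.sqrt T.card * l2 p := by positivity
      nlinarith [key, htvnn, hrnn]
    -- combine
    have hsTpos : 0 < Real.sqrt (T.card : ℝ) := Real.sqrt_pos.mpr hTpos
    have hsdpos : 0 < Real.sqrt (G.maxDegree : ℝ) := Real.sqrt_pos.mpr (by exact_mod_cast hdpos)
    have hMpos : 0 < min (Real.sqrt (G.maxDegree : ℝ)) (Real.sqrt (T.card : ℝ)) :=
      lt_min hsdpos hsTpos
    rw [div_le_div_iff₀ (by positivity) htvpos, one_mul]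
    rcases le_total (Real.sqrt (G.maxDegree : ℝ)) (Real.sqrt (T.card : ℝ)) with h | h
    · rw [min_eq_left h]
      calc tvOn D T p ≤ Real.sqrt G.maxDegree * Real.sqrt T.card * l2 p := boundB
        _ ≤ Real.sqrt T.card * l2 p * (2 * Real.sqrt G.maxDegree) := by nlinarith
    · rw [min_eq_right h]
      have hTT : Real.sqrt (T.card : ℝ) * Real.sqrt (T.card : ℝ) = (T.card : ℝ) :=
        Real.mul_self_sqrt (le_of_lt hTpos)
      calc tvOn D T p ≤ (T.card : ℝ) * l2 p := boundA
        _ ≤ Real.sqrt T.card * l2 p * (2 * Real.sqrt T.card) := by nlinarith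

end OneBit
end
end

section
/- Let D be the incidence matrix of a connected undirected graph G on n vertices, and let 0 = λ₁ < λ₂ ≤ … ≤ λ_n be the eigenvalues of the unnormalized Laplacian L = DᵀD. Then the inverse scaling factor satisfies ρ ≤ √2 / λ₂. -/
/-! Write `s = D† e_j` for the `j`-th column of the pseudoinverse and `d_j = Dᵀ e_j` for the
`j`-th row of `D`. The Penrose equations give `L s = Dᵀ D D† e_j = d_j` and put `s` in the range
of `D†`, which is orthogonal to `ker D = ker L`. On `(ker L)ᗮ` the quadratic form of `L` is at
least `λ₂ ‖·‖²`, so `λ₂ ‖s‖² ≤ ⟪s, L s⟫ = ⟪s, d_j⟫ ≤ ‖s‖ ‖d_j‖ = √2 ‖s‖`. -/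

open MeasureTheory ProbabilityTheory Finset Matrix

noncomputable section
namespace OneBit

open scoped InnerProductSpace

theorem _root_.LinearMap.IsSymmetric.mul_norm_sq_le_inner_apply_self
    {E : Type*} [NormedAddCommGroup E] [InnerProductSpace ℝ E] [FiniteDimensional ℝ E]
    {T : E →ₗ[ℝ] E} (hT : T.IsSymmetric) {lam : ℝ}
    (hspec : ∀ μ, Module.End.HasEigenvalue T μ → μ = 0 ∨ lam ≤ μ)
    {v : E} (hv : v ∈ (LinearMap.ker T)ᗮ) :
    lam * ‖v‖ ^ 2 ≤ ⟪v, T v⟫_ℝ := by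
  set b := hT.eigenvectorBasis rfl
  set μ := hT.eigenvalues rfl
  have hTb (i) : T (b i) = μ i • b i := hT.apply_eigenvectorBasis rfl i
  -- `v` has no component along the eigenvectors for `0`, since these lie in `ker T`
  calc lam * ‖v‖ ^ 2 = ∑ i, lam * ⟪b i, v⟫_ℝ ^ 2 := by
        simp only [← b.sum_sq_norm_inner_right v, Real.norm_eq_abs, sq_abs, Finset.mul_sum]
    _ ≤ ∑ i, μ i * ⟪b i, v⟫_ℝ ^ 2 := by
        refine Finset.sum_le_sum fun i _ => ?_
        rcases hspec (μ i) (hT.hasEigenvalue_eigenvalues rfl i) with hμ | hμ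
        · have hbv : ⟪b i, v⟫_ℝ = 0 :=
            Submodule.inner_right_of_mem_orthogonal (by simp [hTb, hμ]) hv
          simp [hμ, hbv]
        · exact mul_le_mul_of_nonneg_right hμ (sq_nonneg _)
    _ = ⟪v, T v⟫_ℝ := by
        rw [← b.sum_inner_mul_inner v (T v)]
        refine Finset.sum_congr rfl fun i _ => ?_
        rw [← hT, hTb, real_inner_smul_left, real_inner_comm v]
        ring

theorem _root_.Matrix.IsHermitian.mul_dotProduct_self_le {ι : Type*} [Fintype ι] [DecidableEq ι]
    {A : Matrix ι ι ℝ} (hA : A.IsHermitian) {lam : ℝ}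
    (hspec : ∀ (μ : ℝ) (v : ι → ℝ), v ≠ 0 → A *ᵥ v = μ • v → μ = 0 ∨ lam ≤ μ)
    {v : ι → ℝ} (hv : ∀ u, A *ᵥ u = 0 → v ⬝ᵥ u = 0) :
    lam * (v ⬝ᵥ v) ≤ v ⬝ᵥ A *ᵥ v := by
  have key := (isSymmetric_toEuclideanLin_iff.mpr hA).mul_norm_sq_le_inner_apply_self
    (lam := lam) (v := WithLp.toLp 2 v) ?_ ?_
  · rw [← real_inner_self_eq_norm_sq] at key
    simpa only [Matrix.toLpLin_toLp, Matrix.toLin'_apply, EuclideanSpace.inner_toLp_toLp,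
      star_trivial, dotProduct_comm v] using key
  · intro μ hμ
    obtain ⟨x, hx⟩ := hμ.exists_hasEigenvector
    refine hspec μ x.ofLp (by simpa using hx.2) ?_
    simpa using congrArg WithLp.ofLp hx.apply_eq_smul
  · rw [Submodule.mem_orthogonal']
    intro u hu
    have hAu : A *ᵥ u.ofLp = 0 := by simpa using congrArg WithLp.ofLp hu
    simpa [EuclideanSpace.inner_eq_star_dotProduct, dotProduct_comm] using hv u.ofLp hAu

namespace IsMoorePenrose

variable {n m : ℕ} {D : Matrix (Fin m) (Fin n) ℝ} {Dd : Matrix (Fin n) (Fin m) ℝ}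

theorem transpose_mul_mul (h : IsMoorePenrose D Dd) : Dᵀ * D * Dd = Dᵀ := by
  obtain ⟨hDDdD, -, hDDd, -⟩ := h
  calc Dᵀ * D * Dd = Dᵀ * (D * Dd)ᵀ := by rw [Matrix.mul_assoc, hDDd]
    _ = (D * Dd * D)ᵀ := by simp only [Matrix.transpose_mul, Matrix.mul_assoc]
    _ = Dᵀ := by rw [hDDdD]

theorem mulVec_dotProduct_eq_zero (h : IsMoorePenrose D Dd) (y : Fin m → ℝ) {u : Fin n → ℝ}
    (hu : D *ᵥ u = 0) : (Dd *ᵥ y) ⬝ᵥ u = 0 := by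
  obtain ⟨-, hDdDDd, -, hDdD⟩ := h
  calc (Dd *ᵥ y) ⬝ᵥ u = ((Dd * D) *ᵥ (Dd *ᵥ y)) ⬝ᵥ u := by rw [mulVec_mulVec, hDdDDd]
    _ = (Dd *ᵥ y) ⬝ᵥ ((Dd * D)ᵀ *ᵥ u) := by
        rw [← vecMul_transpose, dotProduct_mulVec]
    _ = 0 := by rw [hDdD, ← mulVec_mulVec, hu, mulVec_zero, dotProduct_zero]

end IsMoorePenrose

theorem IsIncidenceMatrix.sum_sq_row {n m : ℕ} {G : SimpleGraph (Fin n)}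
    {D : Matrix (Fin m) (Fin n) ℝ} (hD : IsIncidenceMatrix G D) (e : Fin m) :
    ∑ k, D e k ^ 2 = 2 := by
  obtain ⟨ends, -, hadj, -, hval⟩ := hD
  have hne : (ends e).1 ≠ (ends e).2 := (hadj e).1.ne
  rw [Fintype.sum_eq_add _ _ hne fun k hk => by simp [hval, hk.1, hk.2]]
  norm_num [hval, hne.symm]

theorem inverse_scaling_factor_le_general
    {n m : ℕ} (G : SimpleGraph (Fin n))
    (D : Matrix (Fin m) (Fin n) ℝ) (Dd : Matrix (Fin n) (Fin m) ℝ)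
    (hD : IsIncidenceMatrix G D) (hDd : IsMoorePenrose D Dd)
    (lam2 : ℝ) (hlam2pos : 0 < lam2)
    (hSecond : ∀ (x : ℝ) (v : Fin n → ℝ), v ≠ 0 → (Dᵀ * D).mulVec v = x • v →
      x = 0 ∨ lam2 ≤ x) :
    rho Dd ≤ Real.sqrt 2 / lam2 := by
  have hL : (Dᵀ * D).IsHermitian := by
    simpa [conjTranspose_eq_transpose_of_trivial] using isHermitian_conjTranspose_mul_self D
  refine Real.iSup_le (fun j => ?_) (by positivity)
  set s := Dd *ᵥ Pi.single j 1
  have hLs : (Dᵀ * D) *ᵥ s = D j := by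
    rw [mulVec_mulVec, hDd.transpose_mul_mul, mulVec_single_one]
    rfl
  have hquad : lam2 * (s ⬝ᵥ s) ≤ s ⬝ᵥ D j := hLs ▸ hL.mul_dotProduct_self_le hSecond fun u hu =>
    hDd.mulVec_dotProduct_eq_zero _ ((conjTranspose_mul_self_mulVec_eq_zero D u).1 hu)
  set t := √(∑ i, s i ^ 2)
  have hbound : lam2 * t ^ 2 ≤ t * √2 := calc
    lam2 * t ^ 2 = lam2 * (s ⬝ᵥ s) := by
      rw [Real.sq_sqrt (by positivity)]
      simp only [dotProduct, sq]
    _ ≤ s ⬝ᵥ D j := hquad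
    _ ≤ t * √2 := by
      simpa only [dotProduct, hD.sum_sq_row j] using Real.sum_mul_le_sqrt_mul_sqrt univ s (D j)
  change √(∑ i, Dd.col j i ^ 2) ≤ _
  rw [← mulVec_single_one, le_div_iff₀ hlam2pos]
  rcases (Real.sqrt_nonneg _ : 0 ≤ t).eq_or_lt with ht | ht
  · rw [← ht, zero_mul]
    positivity
  · nlinarith

/-- Proposition 1 (second part): if `λ₂ > 0` is the second smallest eigenvalue of the
unnormalized Laplacian `L = DᵀD` of a connected graph (i.e. `λ₂` is an eigenvalue of `L` and
every eigenvalue of `L` is either `0` or at least `λ₂`), then `ρ ≤ √2 / λ₂`. -/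
theorem inverse_scaling_factor_le
    {n m : ℕ} (G : SimpleGraph (Fin n))
    (D : Matrix (Fin m) (Fin n) ℝ) (Dd : Matrix (Fin n) (Fin m) ℝ)
    (hD : IsIncidenceMatrix G D) (hG : G.Connected) (hDd : IsMoorePenrose D Dd)
    (lam2 : ℝ) (hlam2pos : 0 < lam2)
    (hEig : ∃ v : Fin n → ℝ, v ≠ 0 ∧ (Dᵀ * D).mulVec v = lam2 • v)
    (hSecond : ∀ (x : ℝ) (v : Fin n → ℝ), v ≠ 0 → (Dᵀ * D).mulVec v = x • v →
      x = 0 ∨ lam2 ≤ x) :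
    rho Dd ≤ Real.sqrt 2 / lam2 :=
  inverse_scaling_factor_le_general G D Dd hD hDd lam2 hlam2pos hSecond

end OneBit
end
end

section
/- Fix δ ∈ (0,1], assume G is connected, set λ = (√2 ρ / n) log(4n²/δ), and let s = ‖p*‖₀. Then with probability at least 1 − δ, the one-bit TV denoiser satisfies ‖p̂ − p*‖₂² ≤ 4√2 ρ ‖Dp*‖₁ log(4n²/δ) + 4 s log(4/δ) / n. -/
/-!
Write `ε = Y - p*` and `d = p̂ - p*`. Comparing the objective at `p̂` and at `p*` gives
`‖d‖² ≤ 2⟪ε, d⟫ + nλ (‖Dp*‖₁ - ‖Dp̂‖₁)`. As `G` is connected, `ker D` consists of the constants,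
so `d = c𝟙 + D†Dd` with `n c² ≤ ‖d‖²`. Hence `⟪ε, d⟫ = c ∑ᵢ εᵢ + ⟪D†ᵀε, Dd⟫`: the first term is
absorbed into `‖d‖²/2` by AM-GM, the second into the penalty as soon as `2|(D†ᵀε)ⱼ| ≤ nλ` for every
edge `j`. By Hoeffding's inequality and a union bound over the `m ≤ n²` edges both noise bounds hold
with probability `1 - δ`; the coordinates with `p*ᵢ = 0` are almost surely noiseless, so only
`s = ‖p*‖₀` of them enter the bound on `∑ᵢ εᵢ`.
-/

open MeasureTheory ProbabilityTheory Finset Matrix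

noncomputable section
namespace OneBit

/-- `Y` has independent coordinates, with `Y ω i ~ Bernoulli(p i)` taking values in `{0,1}`. -/
def IsBernoulliFamily {Ω : Type*} [MeasurableSpace Ω] {n : ℕ} (μ : Measure Ω)
    (Y : Ω → Fin n → ℝ) (p : Fin n → ℝ) : Prop :=
  (∀ i, Measurable fun ω => Y ω i) ∧
  (∀ ω i, Y ω i = 0 ∨ Y ω i = 1) ∧
  (∀ i, μ {ω | Y ω i = 1} = ENNReal.ofReal (p i)) ∧
  iIndepFun (fun i ω => Y ω i) μ

/-- The one-bit TV denoiser: `phat ∈ [0,1]^n` minimizes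
`(1/n) Σᵢ (yᵢ - pᵢ)² + λ ‖Dp‖₁` over `p ∈ ℝⁿ`. -/
def IsTVDenoiser {n m : ℕ} (D : Matrix (Fin m) (Fin n) ℝ) (lam : ℝ)
    (y phat : Fin n → ℝ) : Prop :=
  (∀ i, phat i ∈ Set.Icc (0:ℝ) 1) ∧
  ∀ q : Fin n → ℝ,
    (1 / (n:ℝ)) * ∑ i, (y i - phat i) ^ 2 + lam * ∑ e, |D.mulVec phat e| ≤
    (1 / (n:ℝ)) * ∑ i, (y i - q i) ^ 2 + lam * ∑ e, |D.mulVec q e|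


end OneBit

open Real NNReal

namespace ProbabilityTheory.HasSubgaussianMGF
variable {Ω : Type*} [MeasurableSpace Ω] {μ : Measure Ω} {X : Ω → ℝ} {c : ℝ≥0}

lemma mono (h : HasSubgaussianMGF X c μ) {c' : ℝ≥0} (hc : c ≤ c') :
    HasSubgaussianMGF X c' μ :=
  ⟨h.integrable_exp_mul, fun t => (h.mgf_le t).trans (exp_le_exp.2 (by gcongr))⟩

/-- The threshold is parametrised by the tail exponent `t`, so that no division by a possibly
vanishing variance proxy `c` occurs. -/
lemma measure_abs_gt_le [IsFiniteMeasure μ] (h : HasSubgaussianMGF X c μ) {t : ℝ} (ht : 0 ≤ t) :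
    μ {ω | √(2 * c * t) < |X ω|} ≤ ENNReal.ofReal (2 * exp (-t)) := by
  rcases eq_or_ne c 0 with rfl | hc
  · have hX : ∀ᵐ ω ∂μ, X ω = 0 := h.ae_eq_zero_of_hasSubgaussianMGF_zero
    refine le_of_eq_of_le (measure_eq_zero_iff_ae_notMem.2 ?_) zero_le
    filter_upwards [hX] with ω hω
    simp [hω]
  have htail : ∀ {Z : Ω → ℝ}, HasSubgaussianMGF Z c μ →
      μ {ω | √(2 * c * t) ≤ Z ω} ≤ ENNReal.ofReal (exp (-t)) := fun hZ => by
    rw [← ENNReal.ofReal_toReal (measure_ne_top μ _)]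
    refine ENNReal.ofReal_le_ofReal ((hZ.measure_ge_le (sqrt_nonneg _)).trans_eq ?_)
    rw [sq_sqrt (by positivity)]
    field_simp
  calc μ {ω | √(2 * c * t) < |X ω|}
      ≤ μ ({ω | √(2 * c * t) ≤ X ω} ∪ {ω | √(2 * c * t) ≤ (-X) ω}) := by
        refine measure_mono fun ω (hω : √(2 * c * t) < |X ω|) => ?_
        rcases lt_abs.1 hω with h' | h'
        exacts [Or.inl h'.le, Or.inr h'.le]
    _ ≤ ENNReal.ofReal (exp (-t)) + ENNReal.ofReal (exp (-t)) :=
        (measure_union_le _ _).trans (add_le_add (htail h) (htail h.neg))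
    _ = ENNReal.ofReal (2 * exp (-t)) := by
        rw [← ENNReal.ofReal_add (by positivity) (by positivity), two_mul]

end ProbabilityTheory.HasSubgaussianMGF

lemma MeasureTheory.ofReal_one_sub_le_measure_of_ae {Ω : Type*} [MeasurableSpace Ω] {μ : Measure Ω}
    [IsProbabilityMeasure μ] {E B : Set Ω} {δ : ℝ} (hδ : 0 ≤ δ)
    (hE : ∀ᵐ ω ∂μ, ω ∉ B → ω ∈ E) (hB : μ B ≤ ENNReal.ofReal δ) :
    ENNReal.ofReal (1 - δ) ≤ μ E := by
  have hcompl : μ Eᶜ ≤ μ B := measure_mono_ae (hE.mono fun ω h hω => not_not.1 (mt h hω))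
  rw [ENNReal.ofReal_sub _ hδ, ENNReal.ofReal_one, tsub_le_iff_right]
  calc 1 = μ (E ∪ Eᶜ) := by rw [Set.union_compl_self, measure_univ]
    _ ≤ μ E + μ B := (measure_union_le _ _).trans (add_le_add_right hcompl _)
    _ ≤ μ E + ENNReal.ofReal δ := add_le_add_right hB _

lemma two_mul_mul_le_of_abs_le {n c s r : ℝ} (hn : 0 < n) (hs : |s| ≤ r) :
    2 * (c * s) ≤ n * c ^ 2 / 2 + 2 * r ^ 2 / n := by
  have hcs : c * s ≤ |c| * r := (le_abs_self _).trans (by rw [abs_mul]; gcongr)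
  rw [div_add_div _ _ two_ne_zero hn.ne', le_div_iff₀ (by positivity), ← sq_abs c]
  nlinarith [mul_le_mul_of_nonneg_left hcs hn.le, sq_nonneg (n * |c| - 2 * r)]

lemma one_le_log_four_mul_sq_div {n δ : ℝ} (hn : 1 ≤ n) (hδ0 : 0 < δ) (hδ1 : δ ≤ 1) :
    1 ≤ log (4 * n ^ 2 / δ) := by
  rw [le_log_iff_exp_le (by positivity), le_div_iff₀ hδ0]
  nlinarith [exp_one_lt_d9]

lemma two_mul_sqrt_sq_mul_div_two_le {ρ L : ℝ} (hρ : 0 ≤ ρ) (hL : 1 ≤ L) :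
    2 * √(ρ ^ 2 * L / 2) ≤ √2 * ρ * L := by
  rw [← le_div_iff₀' two_pos]
  refine sqrt_le_iff.2 ⟨by positivity, ?_⟩
  rw [div_pow, mul_pow, mul_pow, sq_sqrt zero_le_two]
  nlinarith [mul_nonneg (sq_nonneg ρ) (by linarith : 0 ≤ L - 1)]

namespace OneBit

lemma sum_sq_le_rho_sq {n m : ℕ} (M : Matrix (Fin n) (Fin m) ℝ) (j : Fin m) :
    ∑ i, M i j ^ 2 ≤ rho M ^ 2 :=
  (sqrt_le_iff.1 (le_ciSup (f := fun j => √(∑ i, M i j ^ 2)) (Set.finite_range _).bddAbove j)).2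

lemma rho_nonneg {n m : ℕ} (M : Matrix (Fin n) (Fin m) ℝ) : 0 ≤ rho M :=
  Real.iSup_nonneg fun _ => sqrt_nonneg _

namespace IsBernoulliFamily
variable {Ω : Type*} [MeasurableSpace Ω] {n : ℕ} {μ : Measure Ω} {Y : Ω → Fin n → ℝ}
  {p : Fin n → ℝ}

lemma indicator_eq (hY : IsBernoulliFamily μ Y p) (i : Fin n) :
    (fun ω => Y ω i) = Set.indicator {ω | Y ω i = 1} 1 := by
  funext ω
  rcases hY.2.1 ω i with h | h <;> simp [h]

lemma integral_eq [IsFiniteMeasure μ] (hY : IsBernoulliFamily μ Y p) {i : Fin n} (hp : 0 ≤ p i) :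
    ∫ ω, Y ω i ∂μ = p i := by
  rw [hY.indicator_eq i, integral_indicator_one (by exact hY.1 i (measurableSet_singleton 1)),
    measureReal_def, hY.2.2.1 i, ENNReal.toReal_ofReal hp]

lemma hasSubgaussianMGF [IsProbabilityMeasure μ] (hY : IsBernoulliFamily μ Y p) {i : Fin n}
    (hp : 0 ≤ p i) : HasSubgaussianMGF (fun ω => Y ω i - p i) (1 / 4) μ := by
  have h := hasSubgaussianMGF_of_mem_Icc (μ := μ) (a := 0) (b := 1) (hY.1 i).aemeasurable
    (ae_of_all _ fun ω => by rcases hY.2.1 ω i with h | h <;> simp [h])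
  rw [hY.integral_eq hp] at h
  convert h using 1
  ext
  norm_num

lemma measure_abs_sum_gt_le [IsProbabilityMeasure μ] (hY : IsBernoulliFamily μ Y p)
    (hp : ∀ i, 0 ≤ p i) (s : Finset (Fin n)) (w : Fin n → ℝ) {V t : ℝ}
    (hV : ∑ i ∈ s, w i ^ 2 ≤ V) (ht : 0 ≤ t) :
    μ {ω | √(V * t / 2) < |∑ i ∈ s, w i * (Y ω i - p i)|} ≤ ENNReal.ofReal (2 * exp (-t)) := by
  have hindep : iIndepFun (fun i ω => w i * (Y ω i - p i)) μ :=
    hY.2.2.2.comp _ fun i => (measurable_id.sub_const _).const_mul _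
  have hsum := HasSubgaussianMGF.sum_of_iIndepFun hindep (s := s)
    fun i _ => (hY.hasSubgaussianMGF (hp i)).const_mul (w i)
  have hV0 : 0 ≤ V := (sum_nonneg fun i _ => sq_nonneg (w i)).trans hV
  have hc : ∑ i ∈ s, (⟨w i ^ 2, sq_nonneg _⟩ * (1 / 4) : ℝ≥0) ≤ (V / 4).toNNReal := by
    rw [← NNReal.coe_le_coe, Real.coe_toNNReal _ (by positivity), NNReal.coe_sum]
    show ∑ i ∈ s, w i ^ 2 * (1 / 4 : ℝ) ≤ V / 4
    rw [← sum_mul]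
    linarith
  convert (hsum.mono hc).measure_abs_gt_le ht using 4
  rw [Real.coe_toNNReal _ (by positivity)]
  ring_nf

lemma ae_sum_sub_eq_sum_support (hY : IsBernoulliFamily μ Y p) :
    ∀ᵐ ω ∂μ, ∑ i, (Y ω i - p i) = ∑ i ∈ univ.filter (p · ≠ 0), (Y ω i - p i) := by
  have hzero : ∀ᵐ ω ∂μ, ∀ i, p i = 0 → Y ω i = 0 := ae_all_iff.2 fun i => by
    by_cases hp : p i = 0
    · have : μ {ω | Y ω i = 1} = 0 := by rw [hY.2.2.1 i, hp, ENNReal.ofReal_zero]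
      filter_upwards [measure_eq_zero_iff_ae_notMem.1 this] with ω hω _
      exact (hY.2.1 ω i).resolve_right hω
    · exact ae_of_all _ fun _ h => absurd h hp
  filter_upwards [hzero] with ω hω
  rw [sum_filter]
  exact sum_congr rfl fun i _ => by split_ifs with h <;> simp_all

lemma measure_abs_sum_support_gt_le [IsProbabilityMeasure μ] (hY : IsBernoulliFamily μ Y p)
    (hp : ∀ i, 0 ≤ p i) {t : ℝ} (ht : 0 ≤ t) :
    μ {ω | √(supp0 p * t / 2) < |∑ i ∈ univ.filter (p · ≠ 0), (Y ω i - p i)|}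
      ≤ ENNReal.ofReal (2 * exp (-t)) := by
  have hs : ∑ i ∈ univ.filter (p · ≠ 0), (1 : ℝ) ^ 2 ≤ supp0 p := by
    simp [supp0, Nat.card_eq_fintype_card, Fintype.card_subtype]
  simpa using hY.measure_abs_sum_gt_le hp _ 1 hs ht

lemma measure_iUnion_abs_sum_gt_le [IsProbabilityMeasure μ] {m : ℕ}
    (hY : IsBernoulliFamily μ Y p) (hp : ∀ i, 0 ≤ p i) (M : Matrix (Fin n) (Fin m) ℝ) {t : ℝ}
    (ht : 0 ≤ t) :
    μ (⋃ j, {ω | √(rho M ^ 2 * t / 2) < |∑ i, M i j * (Y ω i - p i)|})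
      ≤ ENNReal.ofReal (m * (2 * exp (-t))) := by
  calc _ ≤ ∑ j, μ {ω | √(rho M ^ 2 * t / 2) < |∑ i, M i j * (Y ω i - p i)|} :=
        measure_iUnion_fintype_le μ _
    _ ≤ ∑ _j : Fin m, ENNReal.ofReal (2 * exp (-t)) :=
        sum_le_sum fun j _ => hY.measure_abs_sum_gt_le hp univ _ (sum_sq_le_rho_sq M j) ht
    _ = ENNReal.ofReal (m * (2 * exp (-t))) := by
        rw [sum_const, card_univ, Fintype.card_fin, nsmul_eq_mul,
          ENNReal.ofReal_mul (Nat.cast_nonneg _), ENNReal.ofReal_natCast]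

lemma measure_noise_gt_le [IsProbabilityMeasure μ] {m : ℕ} (hY : IsBernoulliFamily μ Y p)
    (hp : ∀ i, 0 ≤ p i) (M : Matrix (Fin n) (Fin m) ℝ) (hm : m ≤ n ^ 2) (hn : 0 < n) {δ : ℝ}
    (hδ0 : 0 < δ) (hδ1 : δ ≤ 1) :
    μ ({ω | √(supp0 p * log (4 / δ) / 2) < |∑ i ∈ univ.filter (p · ≠ 0), (Y ω i - p i)|} ∪
      ⋃ j, {ω | √(rho M ^ 2 * log (4 * n ^ 2 / δ) / 2) < |∑ i, M i j * (Y ω i - p i)|})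
      ≤ ENNReal.ofReal δ := by
  have hn' : (1 : ℝ) ≤ n := Nat.one_le_cast.2 hn
  have hA := hY.measure_abs_sum_support_gt_le hp (t := log (4 / δ))
    (log_nonneg (by rw [le_div_iff₀ hδ0]; linarith))
  have hB := hY.measure_iUnion_abs_sum_gt_le hp M
    (zero_le_one.trans (one_le_log_four_mul_sq_div hn' hδ0 hδ1))
  rw [Real.exp_neg, exp_log (by positivity), inv_div] at hA hB
  have hm' : (m : ℝ) * (2 * (δ / (4 * n ^ 2))) ≤ δ / 2 :=
    calc (m : ℝ) * (2 * (δ / (4 * n ^ 2))) ≤ n ^ 2 * (2 * (δ / (4 * n ^ 2))) := by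
          gcongr; exact_mod_cast hm
      _ = δ / 2 := by field_simp; ring
  calc _ ≤ ENNReal.ofReal (2 * (δ / 4)) + ENNReal.ofReal (δ / 2) :=
        (measure_union_le _ _).trans (add_le_add hA (hB.trans (ENNReal.ofReal_le_ofReal hm')))
    _ = ENNReal.ofReal δ := by
        rw [← ENNReal.ofReal_add (by positivity) (by positivity)]
        ring_nf

end IsBernoulliFamily

variable {n m : ℕ} {G : SimpleGraph (Fin n)} {D : Matrix (Fin m) (Fin n) ℝ}
  {Dd : Matrix (Fin n) (Fin m) ℝ}

namespace IsIncidenceMatrix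

lemma card_le (hD : IsIncidenceMatrix G D) : m ≤ n ^ 2 := by
  obtain ⟨ends, hinj, -⟩ := hD
  simpa [sq] using Fintype.card_le_of_injective ends hinj

lemma eq_of_adj (hD : IsIncidenceMatrix G D) {v : Fin n → ℝ} (hv : D *ᵥ v = 0) {i j : Fin n}
    (hij : G.Adj i j) : v i = v j := by
  wlog hlt : i < j generalizing i j
  · exact (this hij.symm (lt_of_le_of_ne (not_lt.1 hlt) hij.ne.symm)).symm
  obtain ⟨ends, -, -, hsurj, hent⟩ := hD
  obtain ⟨e, he⟩ := hsurj i j hlt hij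
  have hrow : (D *ᵥ v) e = v i - v j := by
    rw [mulVec, dotProduct,
      Fintype.sum_eq_add i j hlt.ne fun k hk => by simp [hent, he, hk.1, hk.2]]
    simp [hent, he, hlt.ne', sub_eq_add_neg]
  have h0 := congrFun hv e
  rw [hrow, Pi.zero_apply] at h0
  linarith

lemma eq_of_mulVec_eq_zero (hD : IsIncidenceMatrix G D) (hG : G.Connected) {v : Fin n → ℝ}
    (hv : D *ᵥ v = 0) (i j : Fin n) : v i = v j := by
  obtain ⟨w⟩ := hG i j
  induction w with
  | nil => rfl
  | cons h _ ih => exact (hD.eq_of_adj hv h).trans ih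

end IsIncidenceMatrix

namespace IsMoorePenrose

lemma mulVec_sub_mulVec_eq_zero (hDd : IsMoorePenrose D Dd) (d : Fin n → ℝ) :
    D *ᵥ (d - (Dd * D) *ᵥ d) = 0 := by
  rw [mulVec_sub, mulVec_mulVec, ← Matrix.mul_assoc, hDd.1, sub_self]

lemma sum_sq_sub_mulVec_le (hDd : IsMoorePenrose D Dd) (d : Fin n → ℝ) :
    ∑ i, (d - (Dd * D) *ᵥ d) i ^ 2 ≤ ∑ i, d i ^ 2 := by
  set P := Dd * D
  have hPP : P * P = P := by rw [← Matrix.mul_assoc, hDd.2.1]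
  -- `P` is the orthogonal projection onto the row space of `D`
  have horth : (P *ᵥ d) ⬝ᵥ (d - P *ᵥ d) = 0 := by
    have hPd : (P *ᵥ d) ᵥ* P = P *ᵥ d := by
      rw [← mulVec_transpose, hDd.2.2.2, mulVec_mulVec, hPP]
    rw [dotProduct_sub, dotProduct_mulVec, hPd, sub_self]
  have hsplit : ∑ i, d i ^ 2 = ∑ i, (d - P *ᵥ d) i ^ 2 + 2 * ((P *ᵥ d) ⬝ᵥ (d - P *ᵥ d))
      + ∑ i, (P *ᵥ d) i ^ 2 := by
    simp only [dotProduct, mul_sum, ← sum_add_distrib]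
    exact sum_congr rfl fun i _ => by simp only [Pi.sub_apply]; ring
  rw [hsplit, horth]
  linarith [sum_nonneg fun i (_ : i ∈ univ) => sq_nonneg ((P *ᵥ d) i)]

end IsMoorePenrose

lemma exists_eq_const_add_of_connected (hD : IsIncidenceMatrix G D) (hG : G.Connected)
    (hDd : IsMoorePenrose D Dd) (hn : 0 < n) (d : Fin n → ℝ) :
    ∃ c : ℝ, n * c ^ 2 ≤ ∑ i, d i ^ 2 ∧ ∀ i, d i = c + (Dd *ᵥ (D *ᵥ d)) i := by
  set v := d - (Dd * D) *ᵥ d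
  have hconst : ∀ i, v i = v ⟨0, hn⟩ :=
    fun i => hD.eq_of_mulVec_eq_zero hG (hDd.mulVec_sub_mulVec_eq_zero d) i _
  refine ⟨v ⟨0, hn⟩, ?_, fun i => ?_⟩
  · calc (n : ℝ) * v ⟨0, hn⟩ ^ 2 = ∑ i, v i ^ 2 := by simp [hconst]
      _ ≤ ∑ i, d i ^ 2 := hDd.sum_sq_sub_mulVec_le d
  · rw [← hconst i, mulVec_mulVec]
    simp [v]

lemma IsTVDenoiser.sum_sq_sub_le {lam : ℝ} {y phat : Fin n → ℝ} (hopt : IsTVDenoiser D lam y phat)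
    (hn : 0 < n) (q : Fin n → ℝ) :
    ∑ i, (phat i - q i) ^ 2 ≤ 2 * ∑ i, (y i - q i) * (phat i - q i)
      + n * lam * (∑ e, |(D *ᵥ q) e| - ∑ e, |(D *ᵥ phat) e|) := by
  have h := hopt.2 q
  have hsq : ∑ i, (y i - phat i) ^ 2 = ∑ i, (y i - q i) ^ 2
      - 2 * ∑ i, (y i - q i) * (phat i - q i) + ∑ i, (phat i - q i) ^ 2 := by
    rw [mul_sum, ← sum_sub_distrib, ← sum_add_distrib]
    exact sum_congr rfl fun i _ => by ring
  have hn' : (0 : ℝ) < n := Nat.cast_pos.2 hn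
  rw [hsq] at h
  have := mul_le_mul_of_nonneg_left h hn'.le
  field_simp at this
  linarith

theorem sum_sq_sub_le_of_noise_le (hD : IsIncidenceMatrix G D) (hG : G.Connected)
    (hDd : IsMoorePenrose D Dd) (hn : 0 < n) {lam r : ℝ} {y phat pstar : Fin n → ℝ}
    (hopt : IsTVDenoiser D lam y phat) (hA : |∑ i, (y i - pstar i)| ≤ r)
    (hB : ∀ j, 2 * |∑ i, Dd i j * (y i - pstar i)| ≤ n * lam) :
    ∑ i, (phat i - pstar i) ^ 2 ≤ 4 * r ^ 2 / n + 4 * (n * lam) * ∑ e, |(D *ᵥ pstar) e| := by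
  set ε : Fin n → ℝ := y - pstar
  set d : Fin n → ℝ := phat - pstar
  obtain ⟨c, hc, hd⟩ := exists_eq_const_add_of_connected hD hG hDd hn d
  have hsplit : ∑ i, (y i - pstar i) * (phat i - pstar i)
      = c * ∑ i, (y i - pstar i) + (ε ᵥ* Dd) ⬝ᵥ (D *ᵥ d) := by
    rw [← dotProduct_mulVec]
    simp only [dotProduct, mul_sum, ← sum_add_distrib]
    refine sum_congr rfl fun i _ => ?_
    rw [show phat i - pstar i = d i from rfl, hd i]
    simp only [ε, Pi.sub_apply]
    ring
  have hnoise : 2 * ((ε ᵥ* Dd) ⬝ᵥ (D *ᵥ d))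
      ≤ n * lam * (∑ e, |(D *ᵥ phat) e| + ∑ e, |(D *ᵥ pstar) e|) := by
    simp only [dotProduct, mul_sum, ← sum_add_distrib]
    refine sum_le_sum fun j _ => ?_
    have hj : 2 * |(ε ᵥ* Dd) j| ≤ n * lam := by
      simpa [vecMul, dotProduct, ε, mul_comm] using hB j
    calc 2 * ((ε ᵥ* Dd) j * (D *ᵥ d) j) ≤ 2 * |(ε ᵥ* Dd) j| * |(D *ᵥ d) j| := by
          rw [mul_assoc, ← abs_mul]; exact mul_le_mul_of_nonneg_left (le_abs_self _) two_pos.le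
      _ ≤ n * lam * (|(D *ᵥ phat) j| + |(D *ᵥ pstar) j|) := by
          gcongr
          · exact (mul_nonneg two_pos.le (abs_nonneg _)).trans hj
          · simpa [d, mulVec_sub] using abs_sub ((D *ᵥ phat) j) ((D *ᵥ pstar) j)
  have hbasic := hopt.sum_sq_sub_le hn pstar
  have hconst := two_mul_mul_le_of_abs_le (c := c) (Nat.cast_pos.2 hn) hA
  rw [hsplit] at hbasic
  linear_combination 2 * hbasic + 2 * hconst + 2 * hnoise + hc

/-- Theorem 1 specialized to `T = ∅`: with probability at least `1 - δ`,
`‖p̂ - p*‖₂² ≤ 4√2 ρ ‖Dp*‖₁ log(4n²/δ) + 4 s log(4/δ) / n` where `s = ‖p*‖₀`. -/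
theorem one_bit_tv_denoising_risk_bound_empty
    {n m : ℕ} (G : SimpleGraph (Fin n)) (D : Matrix (Fin m) (Fin n) ℝ)
    (Dd : Matrix (Fin n) (Fin m) ℝ)
    (hD : IsIncidenceMatrix G D) (hG : G.Connected) (hDd : IsMoorePenrose D Dd)
    {Ω : Type*} [MeasurableSpace Ω] (μ : Measure Ω) [IsProbabilityMeasure μ]
    (pstar : Fin n → ℝ) (hpstar : ∀ i, pstar i ∈ Set.Icc (0:ℝ) 1)
    (Y : Ω → Fin n → ℝ) (hY : IsBernoulliFamily μ Y pstar)
    (δ : ℝ) (hδ : δ ∈ Set.Ioc (0:ℝ) 1)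
    (lam : ℝ) (hlam : lam = Real.sqrt 2 * rho Dd / n * Real.log (4 * (n:ℝ) ^ 2 / δ))
    (phat : Ω → Fin n → ℝ) (hphat : ∀ ω, IsTVDenoiser D lam (Y ω) (phat ω)) :
    ENNReal.ofReal (1 - δ) ≤
      μ {ω | ∑ i, (phat ω i - pstar i) ^ 2 ≤
        4 * Real.sqrt 2 * rho Dd * (∑ e, |D.mulVec pstar e|) * Real.log (4 * (n:ℝ) ^ 2 / δ)
        + 4 * (supp0 pstar) * Real.log (4 / δ) / n} := by
  obtain ⟨hδ0, hδ1⟩ := hδ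
  obtain rfl | hn := n.eq_zero_or_pos
  · simpa using hδ0.le
  set L := log (4 * (n : ℝ) ^ 2 / δ)
  have hL : 1 ≤ L := one_le_log_four_mul_sq_div (Nat.one_le_cast.2 hn) hδ0 hδ1
  have hnlam : n * lam = √2 * rho Dd * L := by rw [hlam]; field_simp
  have hLδ : 0 ≤ log (4 / δ) := log_nonneg (by rw [le_div_iff₀ hδ0]; linarith)
  refine ofReal_one_sub_le_measure_of_ae hδ0.le ?_
    (hY.measure_noise_gt_le (fun i => (hpstar i).1) Dd hD.card_le hn hδ0 hδ1)
  filter_upwards [hY.ae_sum_sub_eq_sum_support] with ω hsum hω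
  simp only [Set.mem_union, not_or, Set.mem_iUnion, not_exists, Set.mem_ofPred_eq, not_lt] at hω
  have hB : ∀ j, 2 * |∑ i, Dd i j * (Y ω i - pstar i)| ≤ n * lam := fun j => by
    linarith [hω.2 j, hnlam ▸ two_mul_sqrt_sq_mul_div_two_le (rho_nonneg Dd) hL]
  refine (sum_sq_sub_le_of_noise_le hD hG hDd hn (hphat ω) (hsum ▸ hω.1) hB).trans ?_
  have hs : 0 ≤ supp0 pstar * log (4 / δ) / n := by positivity
  rw [sq_sqrt (by positivity), hnlam]
  linear_combination 2 * hs

end OneBit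
end
end

section
/- Consider the discrete-time networked SIS dynamics p^{k+1}_i = p^k_i + (1 − p^k_i) β_i Σ_{j=1}^n ω_{ij} p^k_j − γ_i p^k_i, with ω_{ij} ≥ 0, β_i > 0, γ_i > 0, and suppose that for every i ∈ [n] one has γ_i < 1 and Σ_{j=1}^n β_i ω_{ij} < 1. If p⁰_i ∈ [0,1] for all i ∈ [n], then for every k > 0 and every i ∈ [n], p^k_i ∈ [0,1]. -/
open MeasureTheory ProbabilityTheory Finset Matrix

noncomputable section
namespace OneBit

/-- Lemma 1 (Paré et al.): for the discrete-time networked SIS dynamics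
`p^{k+1}_i = p^k_i + (1-p^k_i) β_i Σ_j ω_{ij} p^k_j - γ_i p^k_i` under Assumption 1
(`γ_i < 1` and `Σ_j β_i ω_{ij} < 1`), if `p⁰ ∈ [0,1]^n` then `p^k ∈ [0,1]^n` for all `k`. -/
theorem sis_probabilities_stay_in_unit_interval
    {N : ℕ} (β γ : Fin N → ℝ) (w : Fin N → Fin N → ℝ)
    (hw : ∀ i j, 0 ≤ w i j) (hβ : ∀ i, 0 < β i) (hγ : ∀ i, 0 < γ i)
    (hγ1 : ∀ i, γ i < 1) (hrow : ∀ i, ∑ j, β i * w i j < 1)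
    (p : ℕ → Fin N → ℝ)
    (hrec : ∀ k i, p (k + 1) i =
      p k i + (1 - p k i) * β i * (∑ j, w i j * p k j) - γ i * p k i)
    (h0 : ∀ i, p 0 i ∈ Set.Icc (0:ℝ) 1) :
    ∀ k, 0 < k → ∀ i, p k i ∈ Set.Icc (0:ℝ) 1 := by
  have main : ∀ k, ∀ i, p k i ∈ Set.Icc (0:ℝ) 1 := by
    intro k
    induction k with
    | zero => exact h0
    | succ k ih =>
      intro i
      have hx0 : 0 ≤ p k i := (ih i).1
      have hx1 : p k i ≤ 1 := (ih i).2
      have hS0 : 0 ≤ ∑ j, w i j * p k j :=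
        Finset.sum_nonneg fun j _ => mul_nonneg (hw i j) ((ih j).1)
      have hS1 : β i * (∑ j, w i j * p k j) ≤ ∑ j, β i * w i j := by
        rw [Finset.mul_sum]
        apply Finset.sum_le_sum
        intro j _
        rw [← mul_assoc]
        exact mul_le_of_le_one_right (mul_nonneg (hβ i).le (hw i j)) ((ih j).2)
      have key : p (k+1) i = p k i * (1 - γ i) + (1 - p k i) * (β i * (∑ j, w i j * p k j)) := by
        rw [hrec k i]; ring
      constructor
      · rw [key]
        have h1 : 0 ≤ p k i * (1 - γ i) := mul_nonneg hx0 (by linarith [hγ1 i])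
        have h2 : 0 ≤ (1 - p k i) * (β i * (∑ j, w i j * p k j)) :=
          mul_nonneg (by linarith) (mul_nonneg (hβ i).le hS0)
        linarith
      · rw [key]
        have h1 : p k i * (1 - γ i) ≤ p k i :=
          mul_le_of_le_one_right hx0 (by linarith [hγ i])
        have h2 : (1 - p k i) * (β i * (∑ j, w i j * p k j)) ≤ (1 - p k i) * 1 := by
          apply mul_le_mul_of_nonneg_left _ (by linarith)
          exact hS1.trans (hrow i).le
        linarith
  intro k _ i
  exact main k i

end OneBit
end
end
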